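/- arXiv:2407.18355 — 3 statements merged into one kernel-verified Lean document; each statement's English description precedes it below -/
import Mathlib

section
/- For k ≥ 2 and n ≥ 0, the sum of the first n+1 k-generalized Fibonacci numbers f^{(k)}_0 + f^{(k)}_1 + ... + f^{(k)}_n equals ∑_{j=0}^{⌊n/(k+1)⌋} (-1)^j · C(n - jk, j) · 2^{n - j(k+1)}. -/
/-- The k-generalized Fibonacci sequence: `f 0 = 1`, and for `n ≥ 1`,
`f n = ∑_{i=1}^{k} f (n - i)` where terms with negative index are `0`. -/
def kbonacci (k : ℕ) : ℕ → ℕ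
  | 0 => 1
  | n + 1 => ∑ i ∈ Finset.range k, if i ≤ n then kbonacci k (n - i) else 0
decreasing_by omega

/-- The unsigned Stirling numbers of the first kind. -/
def stirling1 : ℕ → ℕ → ℕ
  | 0, 0 => 1
  | 0, _ + 1 => 0
  | _ + 1, 0 => 0
  | n + 1, j + 1 => n * stirling1 n (j + 1) + stirling1 n j

/-- The summand of the right-hand side. -/
def Tb (k m j : ℕ) : ℤ :=
  (-1 : ℤ) ^ j * (Nat.choose (m - j * k) j : ℤ) * 2 ^ (m - j * (k + 1))

lemma Tb_vanish (k m j : ℕ) (h : m < j * (k + 1)) : Tb k m j = 0 := by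
  have hj : 0 < j := by
    rcases Nat.eq_zero_or_pos j with hj | hj
    · subst hj; simp at h
    · exact hj
  have e : j * (k + 1) = j * k + j := by ring
  have hc : m - j * k < j := by omega
  unfold Tb
  rw [Nat.choose_eq_zero_of_lt hc]
  simp

lemma sum_ext (k m N : ℕ) (h : m / (k + 1) + 1 ≤ N) :
    ∑ j ∈ Finset.range N, Tb k m j = ∑ j ∈ Finset.range (m / (k + 1) + 1), Tb k m j := by
  symm
  apply Finset.sum_subset (Finset.range_subset_range.2 h)
  intro j hj hj'
  simp only [Finset.mem_range] at hj hj'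
  have hd : m / (k + 1) < j := by omega
  have hlt : m < j * (k + 1) := by
    have h2 := (Nat.div_lt_iff_lt_mul (by omega : 0 < k + 1)).1 hd
    exact h2
  exact Tb_vanish k m j hlt

lemma Tb_rec (k m j : ℕ) (hm : k ≤ m) :
    Tb k (m + 1) (j + 1) = 2 * Tb k m (j + 1) - Tb k (m - k) j := by
  have e1 : (j + 1) * (k + 1) = (j + 1) * k + (j + 1) := by ring
  have e2 : (j + 1) * k = j * k + k := by ring
  have e3 : j * (k + 1) = j * k + j := by ring
  have e4 : (j + 1) * (k + 1) = j * (k + 1) + (k + 1) := by ring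
  by_cases h : (j + 1) * (k + 1) ≤ m + 1
  · have hk1 : (j + 1) * k ≤ m := by omega
    by_cases h2 : (j + 1) * (k + 1) ≤ m
    · -- generic case: Pascal
      have epow : m + 1 - (j + 1) * (k + 1) = (m - (j + 1) * (k + 1)) + 1 := by omega
      have epow2 : (m - k) - j * (k + 1) = (m - (j + 1) * (k + 1)) + 1 := by omega
      have echo : m + 1 - (j + 1) * k = (m - (j + 1) * k) + 1 := by omega
      have echo2 : (m - k) - j * k = m - (j + 1) * k := by omega
      unfold Tb
      rw [epow, epow2, echo, echo2, Nat.choose_succ_succ]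
      simp only [Nat.succ_eq_add_one]
      push_cast
      ring
    · -- boundary case: (j+1)*(k+1) = m+1
      have heq : (j + 1) * (k + 1) = m + 1 := by omega
      have hm1 : m - (j + 1) * k = j := by omega
      have hm2 : (m - k) - j * k = j := by omega
      have hp1 : m + 1 - (j + 1) * k = j + 1 := by omega
      have he1 : m + 1 - (j + 1) * (k + 1) = 0 := by omega
      have he2 : m - (j + 1) * (k + 1) = 0 := by omega
      have he3 : (m - k) - j * (k + 1) = 0 := by omega
      unfold Tb
      rw [hm1, hm2, hp1, he1, he2, he3]
      simp [Nat.choose_self, Nat.choose_succ_self]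
      ring
  · -- all three terms vanish
    have h1 : Tb k (m + 1) (j + 1) = 0 := Tb_vanish _ _ _ (by omega)
    have h2 : Tb k m (j + 1) = 0 := Tb_vanish _ _ _ (by omega)
    have h3 : Tb k (m - k) j = 0 := Tb_vanish _ _ _ (by omega)
    rw [h1, h2, h3]; ring

/-- Recurrence for the RHS. -/
lemma A_rec (k m : ℕ) (hm : k ≤ m) :
    (∑ j ∈ Finset.range ((m + 1) / (k + 1) + 1), Tb k (m + 1) j) =
      2 * (∑ j ∈ Finset.range (m / (k + 1) + 1), Tb k m j) -
        ∑ j ∈ Finset.range ((m - k) / (k + 1) + 1), Tb k (m - k) j := by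
  rw [← sum_ext k (m + 1) (m + 2) (by have := Nat.div_le_self (m+1) (k+1); omega),
      ← sum_ext k m (m + 2) (by have := Nat.div_le_self m (k+1); omega),
      ← sum_ext k (m - k) (m + 1) (by have := Nat.div_le_self (m-k) (k+1); omega)]
  rw [Finset.sum_range_succ' (fun j => Tb k (m + 1) j) (m + 1),
      Finset.sum_range_succ' (fun j => Tb k m j) (m + 1)]
  have h0 : Tb k (m + 1) 0 = 2 * Tb k m 0 := by
    unfold Tb; simp [pow_succ]; ring
  have hsum : ∑ j ∈ Finset.range (m + 1), Tb k (m + 1) (j + 1) =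
      ∑ j ∈ Finset.range (m + 1), (2 * Tb k m (j + 1) - Tb k (m - k) j) :=
    Finset.sum_congr rfl fun j _ => Tb_rec k m j hm
  simp only [hsum, h0, Finset.sum_sub_distrib]
  rw [← Finset.mul_sum]
  ring

lemma S_small (k n : ℕ) (hn : n ≤ k) :
    ∑ t ∈ Finset.range (n + 1), kbonacci k t = 2 ^ n := by
  induction n with
  | zero => simp [kbonacci]
  | succ n ih =>
    have hn' : n ≤ k := by omega
    rw [Finset.sum_range_succ, ih hn']
    have hf : kbonacci k (n + 1) = 2 ^ n := by
      rw [kbonacci]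
      have hsplit : ∑ i ∈ Finset.range k, (if i ≤ n then kbonacci k (n - i) else 0) =
          ∑ i ∈ Finset.range (n + 1), (if i ≤ n then kbonacci k (n - i) else 0) +
          ∑ i ∈ Finset.Ico (n + 1) k, (if i ≤ n then kbonacci k (n - i) else 0) := by
        rw [Finset.sum_range_add_sum_Ico _ (by omega : n + 1 ≤ k)]
      rw [hsplit]
      have hz : ∑ i ∈ Finset.Ico (n + 1) k, (if i ≤ n then kbonacci k (n - i) else 0) = 0 := by
        apply Finset.sum_eq_zero
        intro i hi
        simp only [Finset.mem_Ico] at hi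
        rw [if_neg (by omega)]
      rw [hz, add_zero]
      have h1 : ∑ i ∈ Finset.range (n + 1), (if i ≤ n then kbonacci k (n - i) else 0) =
          ∑ i ∈ Finset.range (n + 1), kbonacci k (n - i) := by
        apply Finset.sum_congr rfl
        intro i hi
        simp only [Finset.mem_range] at hi
        rw [if_pos (by omega)]
      rw [h1]
      have hrefl : ∑ i ∈ Finset.range (n + 1), kbonacci k (n - i) =
          ∑ i ∈ Finset.range (n + 1), kbonacci k i := by
        have := Finset.sum_range_reflect (fun i => kbonacci k i) (n + 1)
        simpa using this
      rw [hrefl, ih hn']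
    rw [hf]; ring

lemma S_rec (k n : ℕ) (hn : k ≤ n) :
    ∑ t ∈ Finset.range (n + 2), kbonacci k t + ∑ t ∈ Finset.range (n + 1 - k), kbonacci k t =
      2 * ∑ t ∈ Finset.range (n + 1), kbonacci k t := by
  rw [Finset.sum_range_succ]
  have hf : kbonacci k (n + 1) = ∑ i ∈ Finset.range k, kbonacci k (n - i) := by
    rw [kbonacci]
    apply Finset.sum_congr rfl
    intro i hi
    simp only [Finset.mem_range] at hi
    rw [if_pos (by omega)]
  have hsplit : ∑ t ∈ Finset.range (n + 1), kbonacci k t =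
      ∑ t ∈ Finset.range (n + 1 - k), kbonacci k t +
      ∑ i ∈ Finset.range k, kbonacci k (n + 1 - k + i) := by
    have e : n + 1 = (n + 1 - k) + k := by omega
    conv_lhs => rw [e]
    rw [Finset.sum_range_add]
  have hrefl : ∑ i ∈ Finset.range k, kbonacci k (n + 1 - k + i) =
      ∑ i ∈ Finset.range k, kbonacci k (n - i) := by
    rw [← Finset.sum_range_reflect (fun i => kbonacci k (n + 1 - k + i)) k]
    apply Finset.sum_congr rfl
    intro i hi
    simp only [Finset.mem_range] at hi
    congr 1
    omega
  rw [hrefl] at hsplit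
  omega

theorem stmt_1 (k n : ℕ) (hk : 2 ≤ k) :
    ((∑ t ∈ Finset.range (n + 1), kbonacci k t : ℕ) : ℤ) =
      ∑ j ∈ Finset.range (n / (k + 1) + 1),
        (-1 : ℤ) ^ j * (Nat.choose (n - j * k) j : ℤ) * 2 ^ (n - j * (k + 1)) := by
  have key : ∀ n : ℕ, ((∑ t ∈ Finset.range (n + 1), kbonacci k t : ℕ) : ℤ) =
      ∑ j ∈ Finset.range (n / (k + 1) + 1), Tb k n j := by
    intro n
    induction n using Nat.strong_induction_on with
    | _ n ih =>
      by_cases hn : n ≤ k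
      · rw [S_small k n hn]
        have hd : n / (k + 1) = 0 := Nat.div_eq_of_lt (by omega)
        rw [hd]
        simp [Tb]
      · obtain ⟨m, rfl⟩ : ∃ m, n = m + 1 := ⟨n - 1, by omega⟩
        have hm : k ≤ m := by omega
        have hS := S_rec k m hm
        have hA := A_rec k m hm
        have ih1 := ih m (by omega)
        have ih2 := ih (m - k) (by omega)
        have e : m + 1 - k = (m - k) + 1 := by omega
        rw [e] at hS
        have hSZ : ((∑ t ∈ Finset.range (m + 2), kbonacci k t : ℕ) : ℤ) +
            ((∑ t ∈ Finset.range ((m - k) + 1), kbonacci k t : ℕ) : ℤ) =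
            2 * ((∑ t ∈ Finset.range (m + 1), kbonacci k t : ℕ) : ℤ) := by
          exact_mod_cast congrArg (Nat.cast : ℕ → ℤ) hS
        rw [ih1, ih2] at hSZ
        rw [hA]
        linarith [hSZ]
  rw [key n]
  rfl
end

section
/- For m ≥ 1 and k ≥ 1, the following identity holds: ∑_{j=0}^{m-1} (-1)^j · C((m-j)k - 1, j) · 2^{(m-j)k} / 2^{j+1} = ∑_{i=1}^{m} ∑_{j=1}^{i} 2^{(m-i+1)k} · (-1)^{j-1} · k^{j-1} · S(i,j) · (m-i+1)^{j-1} / ((i-1)! · 2^i), as an identity of rational numbers. -/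
lemma stirling1_zero (n : ℕ) : ∀ j, n < j → stirling1 n j = 0 := by
  induction n with
  | zero => intro j hj; cases j with
    | zero => omega
    | succ j => rfl
  | succ n ih =>
    intro j hj
    cases j with
    | zero => omega
    | succ j =>
      have h1 : stirling1 n (j+1) = 0 := ih _ (by omega)
      have h2 : stirling1 n j = 0 := ih _ (by omega)
      show n * stirling1 n (j+1) + stirling1 n j = 0
      rw [h1, h2]; ring

lemma key (x : ℚ) : ∀ n, ∑ j ∈ Finset.range (n+1),
    (-1 : ℚ)^j * x^j * (stirling1 (n+1) (j+1) : ℚ) =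
    ∏ t ∈ Finset.range n, ((t : ℚ) + 1 - x) := by
  intro n
  induction n with
  | zero => simp [stirling1]
  | succ n ih =>
    have hrec : ∀ j, (stirling1 (n+2) (j+1) : ℚ) =
        (n+1) * (stirling1 (n+1) (j+1) : ℚ) + (stirling1 (n+1) j : ℚ) := by
      intro j
      have : stirling1 (n+2) (j+1) = (n+1) * stirling1 (n+1) (j+1) + stirling1 (n+1) j := rfl
      rw [this]; push_cast; ring
    calc ∑ j ∈ Finset.range (n+2), (-1 : ℚ)^j * x^j * (stirling1 (n+2) (j+1) : ℚ)
        = ∑ j ∈ Finset.range (n+2),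
            (((n:ℚ)+1) * ((-1:ℚ)^j * x^j * (stirling1 (n+1) (j+1) : ℚ))
              + (-1:ℚ)^j * x^j * (stirling1 (n+1) j : ℚ)) := by
          refine Finset.sum_congr rfl fun j _ => ?_
          rw [hrec]; ring
      _ = ((n:ℚ)+1) * (∑ j ∈ Finset.range (n+2), (-1:ℚ)^j * x^j * (stirling1 (n+1) (j+1) : ℚ))
            + ∑ j ∈ Finset.range (n+2), (-1:ℚ)^j * x^j * (stirling1 (n+1) j : ℚ) := by
          rw [Finset.sum_add_distrib, Finset.mul_sum]
      _ = ((n:ℚ)+1) * (∏ t ∈ Finset.range n, ((t : ℚ) + 1 - x))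
            + (-x) * (∏ t ∈ Finset.range n, ((t : ℚ) + 1 - x)) := by
          congr 1
          · rw [Finset.sum_range_succ, stirling1_zero (n+1) (n+2) (by omega)]
            push_cast
            rw [mul_zero, add_zero, ih]
          · rw [Finset.sum_range_succ']
            have h0 : (stirling1 (n+1) 0 : ℚ) = 0 := by
              show ((0:ℕ):ℚ) = 0; simp
            rw [h0, mul_zero, add_zero, ← ih, Finset.mul_sum]
            refine Finset.sum_congr rfl fun j _ => ?_
            ring
      _ = ∏ t ∈ Finset.range (n+1), ((t : ℚ) + 1 - x) := by
          rw [Finset.prod_range_succ]; ring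

lemma desc_prod (n : ℕ) : ∀ r, ∏ t ∈ Finset.range r, ((n:ℚ) - t) = (n.descFactorial r : ℚ) := by
  intro r
  induction r with
  | zero => simp
  | succ r ih =>
    rw [Finset.prod_range_succ, ih, Nat.descFactorial_succ]
    by_cases h : r ≤ n
    · push_cast [h]; ring
    · rw [Nat.descFactorial_of_lt (by omega)]
      push_cast
      rw [Nat.sub_eq_zero_of_le (by omega)]
      push_cast; ring

lemma prod_eq_choose (N r : ℕ) (hN : 1 ≤ N) :
    ∏ t ∈ Finset.range r, ((t : ℚ) + 1 - N) =
      (-1:ℚ)^r * (r.factorial : ℚ) * ((N-1).choose r : ℚ) := by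
  have h1 : ∏ t ∈ Finset.range r, ((t : ℚ) + 1 - N) =
      ∏ t ∈ Finset.range r, ((-1:ℚ) * (((N-1 : ℕ) : ℚ) - t)) := by
    refine Finset.prod_congr rfl fun t _ => ?_
    have : ((N-1 : ℕ) : ℚ) = (N : ℚ) - 1 := by push_cast [hN]; ring
    rw [this]; ring
  rw [h1, Finset.prod_mul_distrib, Finset.prod_const, Finset.card_range, desc_prod,
    Nat.descFactorial_eq_factorial_mul_choose]
  push_cast; ring

theorem stmt_3 (m k : ℕ) (hm : 1 ≤ m) (hk : 1 ≤ k) :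
    ∑ j ∈ Finset.range m,
        (-1 : ℚ) ^ j * (Nat.choose ((m - j) * k - 1) j : ℚ) * 2 ^ ((m - j) * k) / 2 ^ (j + 1) =
      ∑ i ∈ Finset.Icc 1 m, ∑ j ∈ Finset.Icc 1 i,
        (2 : ℚ) ^ ((m - i + 1) * k) * (-1) ^ (j - 1) * (k : ℚ) ^ (j - 1) *
          (stirling1 i j : ℚ) * ((m - i + 1 : ℕ) : ℚ) ^ (j - 1) /
            ((Nat.factorial (i - 1) : ℚ) * 2 ^ i) := by
  rw [show Finset.Icc 1 m = Finset.Ico 1 (m+1) by rw [Finset.Ico_add_one_right_eq_Icc],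
    Finset.sum_Ico_eq_sum_range]
  simp only [Nat.add_sub_cancel]
  refine Finset.sum_congr rfl fun j hj => ?_
  have hjm : j < m := Finset.mem_range.mp hj
  have ha : m - (1+j) + 1 = m - j := by omega
  have h1j : 1 + j - 1 = j := by omega
  rw [ha, h1j]
  rw [show Finset.Icc 1 (1+j) = Finset.Ico 1 (1+j+1) by rw [Finset.Ico_add_one_right_eq_Icc],
    Finset.sum_Ico_eq_sum_range]
  have hrange : 1 + j + 1 - 1 = j + 1 := by omega
  rw [hrange]
  set c : ℕ := (m - j) * k with hc
  have hc1 : 1 ≤ c := by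
    have : 1 ≤ m - j := by omega
    calc 1 = 1 * 1 := by ring
    _ ≤ (m - j) * k := Nat.mul_le_mul this hk
  have hcq : ((c : ℕ) : ℚ) = ((m - j : ℕ) : ℚ) * k := by rw [hc]; push_cast; ring
  have hsum : ∑ t ∈ Finset.range (j+1),
      (2:ℚ)^c * (-1)^(1+t-1) * (k:ℚ)^(1+t-1) * (stirling1 (1+j) (1+t) : ℚ) *
        ((m-j : ℕ) : ℚ)^(1+t-1) / ((Nat.factorial j : ℚ) * 2^(1+j))
      = (2:ℚ)^c / ((Nat.factorial j : ℚ) * 2^(1+j)) *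
        ∑ t ∈ Finset.range (j+1), (-1:ℚ)^t * ((c:ℕ):ℚ)^t * (stirling1 (j+1) (t+1) : ℚ) := by
    rw [Finset.mul_sum]
    refine Finset.sum_congr rfl fun t _ => ?_
    have h2 : 1 + t - 1 = t := by omega
    rw [h2, add_comm 1 j, add_comm 1 t, hcq, mul_pow]
    ring
  rw [hsum, key ((c:ℕ):ℚ) j, prod_eq_choose c j hc1]
  have hfac : (Nat.factorial j : ℚ) ≠ 0 := Nat.cast_ne_zero.mpr j.factorial_ne_zero
  field_simp
  ring
end

section
/- For m ≥ 1 and k ≥ 1, the identity ∑_{j=0}^{m-1} (-1)^j · ((m-j)k - 1)_j / j! = ∑_{i=1}^{m} ∑_{j=1}^{i} (-1)^{j-1} · S(i,j) · k^{j-1} · (m-i+1)^{j-1} / ((i-1)!) holds in the rationals, where (x)_j is the falling factorial and S is the unsigned Stirling number of the first kind. -/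
lemma stirling1_eq_zero : ∀ {n j : ℕ}, n < j → stirling1 n j = 0 := by
  intro n
  induction n with
  | zero => intro j h; cases j with
    | zero => omega
    | succ j => rfl
  | succ n ih =>
    intro j h
    cases j with
    | zero => omega
    | succ j =>
      have h1 : stirling1 n (j+1) = 0 := ih (by omega)
      have h2 : stirling1 n j = 0 := ih (by omega)
      simp [stirling1, h1, h2]

lemma lemA (n : ℕ) (z : ℚ) :
    ∑ j ∈ Finset.range (n+1), (stirling1 n j : ℚ) * z ^ j = ∏ t ∈ Finset.range n, (z + t) := by
  induction n with
  | zero => simp [stirling1]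
  | succ n ih =>
    set f : ℕ → ℚ := fun j => (stirling1 n j : ℚ) * z ^ j with hf
    have hsum : ∑ j ∈ Finset.range (n+1), f (j+1)
        = ∑ j ∈ Finset.range (n+1), f j - f 0 := by
      have h3 := Finset.sum_range_succ' f (n+1)
      have h4 := Finset.sum_range_succ f (n+1)
      have h5 : f (n+1) = 0 := by
        simp only [hf, stirling1_eq_zero (Nat.lt_succ_self n)]
        simp
      rw [h4, h5] at h3
      linarith
    have hn0 : (n : ℚ) * f 0 = 0 := by
      cases n with
      | zero => simp
      | succ n => simp [hf, stirling1, stirling1_eq_zero (Nat.zero_lt_succ n)]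
    rw [Finset.prod_range_succ, ← ih, Finset.sum_range_succ']
    have hterm : ∀ j ∈ Finset.range (n+1),
        (stirling1 (n+1) (j+1) : ℚ) * z ^ (j+1)
          = (n : ℚ) * f (j+1) + f j * z := by
      intro j _
      show ((n * stirling1 n (j+1) + stirling1 n j : ℕ) : ℚ) * z ^ (j+1) = _
      simp only [hf]
      push_cast
      ring
    rw [Finset.sum_congr rfl hterm, Finset.sum_add_distrib, ← Finset.mul_sum,
      ← Finset.sum_mul, hsum]
    have h0 : (stirling1 (n+1) 0 : ℚ) = 0 := by simp [stirling1]
    rw [h0]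
    push_cast
    linarith [hn0]

lemma lemB (n : ℕ) (x : ℚ) (hx : x ≠ 0) :
    ∑ j ∈ Finset.Icc 1 (n+1), (-1 : ℚ) ^ (j-1) * (stirling1 (n+1) j : ℚ) * x ^ (j-1)
      = (-1 : ℚ) ^ n * ∏ t ∈ Finset.range n, (x - 1 - t) := by
  have hA := lemA (n+1) (-x)
  -- rewrite Icc sum as range sum of shifted terms
  have hIcc : ∑ j ∈ Finset.Icc 1 (n+1), (-1 : ℚ) ^ (j-1) * (stirling1 (n+1) j : ℚ) * x ^ (j-1)
      = ∑ j ∈ Finset.range (n+1), (-1 : ℚ) ^ j * (stirling1 (n+1) (j+1) : ℚ) * x ^ j := by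
    refine Finset.sum_nbij' (fun i => i - 1) (fun j => j + 1) ?_ ?_ ?_ ?_ ?_
    · intro a ha; simp at ha ⊢; omega
    · intro a ha; simp at ha ⊢; omega
    · intro a ha; simp at ha ⊢; omega
    · intro a ha; simp at ha ⊢
    · intro a ha
      simp only [Finset.mem_Icc] at ha
      rw [show a - 1 + 1 = a by omega]
  -- expand lemA sum
  have hA2 : ∑ j ∈ Finset.range (n+2), (stirling1 (n+1) j : ℚ) * (-x) ^ j
      = ∑ j ∈ Finset.range (n+1), (stirling1 (n+1) (j+1) : ℚ) * (-x) ^ (j+1) := by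
    rw [Finset.sum_range_succ']
    simp [stirling1]
  have hprod : ∏ t ∈ Finset.range (n+1), (-x + t)
      = (-x) * ((-1 : ℚ) ^ n * ∏ t ∈ Finset.range n, (x - 1 - t)) := by
    rw [Finset.prod_range_succ']
    have : ∀ t ∈ Finset.range n, (-x + ((t + 1 : ℕ) : ℚ)) = (-1) * (x - 1 - t) := by
      intro t _; push_cast; ring
    rw [Finset.prod_congr rfl this, Finset.prod_mul_distrib, Finset.prod_const,
      Finset.card_range]
    push_cast
    ring
  have key : (-x) * ∑ j ∈ Finset.range (n+1), (-1 : ℚ) ^ j * (stirling1 (n+1) (j+1) : ℚ) * x ^ j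
      = (-x) * ((-1 : ℚ) ^ n * ∏ t ∈ Finset.range n, (x - 1 - t)) := by
    rw [← hprod, ← hA, hA2, Finset.mul_sum]
    apply Finset.sum_congr rfl
    intro j _
    rw [neg_pow, neg_pow]
    ring
  have := mul_left_cancel₀ (neg_ne_zero.mpr hx) key
  rw [hIcc, this]

theorem stmt_7 (m k : ℕ) (hm : 1 ≤ m) (hk : 1 ≤ k) :
    ∑ j ∈ Finset.range m,
        (-1 : ℚ) ^ j * (∏ t ∈ Finset.range j, ((((m - j) * k : ℕ) : ℚ) - 1 - t)) /
          (Nat.factorial j : ℚ) =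
      ∑ i ∈ Finset.Icc 1 m, ∑ j ∈ Finset.Icc 1 i,
        (-1 : ℚ) ^ (j - 1) * (stirling1 i j : ℚ) * (k : ℚ) ^ (j - 1) *
          ((m - i + 1 : ℕ) : ℚ) ^ (j - 1) / (Nat.factorial (i - 1) : ℚ) := by
  symm
  refine Finset.sum_nbij' (fun i => i - 1) (fun j => j + 1) ?_ ?_ ?_ ?_ ?_
  · intro a ha; simp at ha ⊢; omega
  · intro a ha; simp at ha ⊢; omega
  · intro a ha; simp at ha ⊢; omega
  · intro a ha; simp at ha ⊢
  · intro i hi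
    simp only [Finset.mem_Icc] at hi
    obtain ⟨n, rfl⟩ : ∃ n, i = n + 1 := ⟨i - 1, by omega⟩
    simp only [Nat.add_sub_cancel]
    have hmn : m - (n + 1) + 1 = m - n := by omega
    set x : ℚ := (((m - n) * k : ℕ) : ℚ) with hx
    have hxpos : (0 : ℚ) < x := by
      rw [hx]
      have h1 : 1 ≤ (m - n) * k := Nat.one_le_iff_ne_zero.mpr (by
        have hmn' : m - n ≠ 0 := by omega
        positivity)
      exact_mod_cast Nat.lt_of_lt_of_le Nat.zero_lt_one h1
    have hinner : ∀ j ∈ Finset.Icc 1 (n+1),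
        (-1 : ℚ) ^ (j - 1) * (stirling1 (n+1) j : ℚ) * (k : ℚ) ^ (j - 1) *
          ((m - (n+1) + 1 : ℕ) : ℚ) ^ (j - 1) / (Nat.factorial n : ℚ)
        = ((-1 : ℚ) ^ (j-1) * (stirling1 (n+1) j : ℚ) * x ^ (j-1)) / (Nat.factorial n : ℚ) := by
      intro j _
      rw [hmn, hx]
      push_cast
      rw [mul_pow]
      ring
    rw [Finset.sum_congr rfl hinner, ← Finset.sum_div, lemB n x (ne_of_gt hxpos), hx]
end
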